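/- Let φ ∈ GL(ℝ^{2n}) preserve Ω (i.e. Ω(φ·,φ·) = Ω) with J₁ = φ J₀ φ^{-1} compatible, and suppose Id − φ is invertible. Then the endomorphism S = (Π_0^1 − φ^{-1} conj(Π_1^0))(Id − φ) of ℂ^{2n} is symmetric with respect to the bilinear extension of ⟨·,·⟩, and its real part is positive definite; moreover for all Z ∈ ℝ^{2n}: ⟨Π_0^1(φZ − Z), φZ − Z⟩ + i Ω(φZ, Z) = ⟨S Z, Z⟩, i.e. exp(−π[⟨Π_0^1(φZ−Z),(φZ−Z)⟩ + iΩ(φZ,Z)]) = exp(−π⟨(Π_0^1 − φ^{-1}conj(Π_1^0))(Id−φ)Z, Z⟩). -/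

import Mathlib

/-!
Write `G = J₀`. Symplecticity `φᵀGφ = G` gives `1 - J₁G = 1 + φφᵀ` for `J₁ = φGφ⁻¹`, so
`A = (1 + φφᵀ)⁻¹` is positive definite, `Π₀¹ = A(1 - iJ₁)` and `conj Π₁⁰ = (1 - A)(1 + iG)`.
Hence `S = S₀ + i S₁` with `S₀ = (1 - φ)ᵀA(1 - φ)`, positive definite because `1 - φ` is invertible,
and `S₁ = φᵀG(φ - 1) - (φ - 1)ᵀGA(φ - 1)`, which is symmetric because `GA + AG = G`.
Evaluating on `Z` with `w = φZ - Z`, the real parts agree trivially and the imaginary parts agree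
because `Ω(w, φZ) = Ω(φZ, Z)`.
-/

open Matrix MeasureTheory

noncomputable section

/-- Standard complex structure on ℝ^{2n}: J₀ e_{2k} = e_{2k+1}, J₀ e_{2k+1} = -e_{2k}. -/
def J0 (n : ℕ) : Matrix (Fin (2*n)) (Fin (2*n)) ℝ :=
  Matrix.of fun i j =>
    if (i : ℕ) = (j : ℕ) + 1 ∧ (j : ℕ) % 2 = 0 then 1
    else if (j : ℕ) = (i : ℕ) + 1 ∧ (i : ℕ) % 2 = 0 then -1 else 0

/-- Standard symplectic form Ω(u,v) = ⟨J₀ u, v⟩. -/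
def Omega (n : ℕ) (u v : Fin (2*n) → ℝ) : ℝ := (J0 n *ᵥ u) ⬝ᵥ v

/-- A complex structure J compatible with Ω: J² = -Id, Ω is J-invariant,
and ⟨·,·⟩_J := Ω(·, J·) is positive definite. -/
def Compatible (n : ℕ) (J : Matrix (Fin (2*n)) (Fin (2*n)) ℝ) : Prop :=
  J * J = -1 ∧ (∀ u v, Omega n (J *ᵥ u) (J *ᵥ v) = Omega n u v) ∧
    ∀ v : Fin (2*n) → ℝ, v ≠ 0 → 0 < Omega n v (J *ᵥ v)

/-- Complexification of a real matrix. -/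
def mc {m : ℕ} (M : Matrix (Fin m) (Fin m) ℝ) : Matrix (Fin m) (Fin m) ℂ :=
  M.map (fun x => (x : ℂ))

/-- Complexification of a real vector. -/
def vc {m : ℕ} (v : Fin m → ℝ) : Fin m → ℂ := fun i => (v i : ℂ)

/-- Projection P^{(1,0)} = ½(Id - iK) onto the +i eigenspace of K. -/
def P10 {n : ℕ} (K : Matrix (Fin (2*n)) (Fin (2*n)) ℝ) : Matrix (Fin (2*n)) (Fin (2*n)) ℂ :=
  (1/2 : ℂ) • (1 - Complex.I • mc K)

/-- Projection P^{(0,1)} = ½(Id + iK) onto the -i eigenspace of K. -/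
def P01 {n : ℕ} (K : Matrix (Fin (2*n)) (Fin (2*n)) ℝ) : Matrix (Fin (2*n)) (Fin (2*n)) ℂ :=
  (1/2 : ℂ) • (1 + Complex.I • mc K)

/-- `Amat n K J = (½(Id + (-K)·J))⁻¹`; so `Amat n (J0 n) J` is A_t^0 and
`Amat n J (J0 n)` is A_0^t. -/
def Amat (n : ℕ) (K J : Matrix (Fin (2*n)) (Fin (2*n)) ℝ) : Matrix (Fin (2*n)) (Fin (2*n)) ℝ :=
  ((1/2 : ℝ) • (1 + (-K) * J))⁻¹

/-- Π_t^0 = A_t^0 · P₀^{(1,0)}, the projection onto V_t^{(1,0)} with kernel V₀^{(0,1)}. -/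
def PiT0 (n : ℕ) (J : Matrix (Fin (2*n)) (Fin (2*n)) ℝ) : Matrix (Fin (2*n)) (Fin (2*n)) ℂ :=
  mc (Amat n (J0 n) J) * P10 (J0 n)

/-- Π_0^t = A_0^t · P_t^{(1,0)}, the projection onto V₀^{(1,0)} with kernel V_t^{(0,1)}. -/
def Pi0T (n : ℕ) (J : Matrix (Fin (2*n)) (Fin (2*n)) ℝ) : Matrix (Fin (2*n)) (Fin (2*n)) ℂ :=
  mc (Amat n J (J0 n)) * P10 J

/-- Model Bergman kernel 𝒫_J(Z,Z') = exp(-(π/2)⟨(-J₀J)(Z-Z'),Z-Z'⟩ - πiΩ(Z,Z')). -/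
def Pker (n : ℕ) (J : Matrix (Fin (2*n)) (Fin (2*n)) ℝ) (Z Z' : Fin (2*n) → ℝ) : ℂ :=
  Complex.exp (-(Real.pi : ℂ)/2 * Complex.ofReal ((((-(J0 n)) * J) *ᵥ (Z - Z')) ⬝ᵥ (Z - Z'))
    - (Real.pi : ℂ) * Complex.I * Complex.ofReal (Omega n Z Z'))

/-- Closed formula for the composed kernel (𝒫_t𝒫_0)(Z,Z'). -/
def PtP0form (n : ℕ) (J : Matrix (Fin (2*n)) (Fin (2*n)) ℝ) (Z Z' : Fin (2*n) → ℝ) : ℂ :=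
  Complex.ofReal (Real.sqrt (Amat n (J0 n) J).det) *
    Complex.exp (-(Real.pi : ℂ) *
      ((Pi0T n J *ᵥ (vc Z - vc Z')) ⬝ᵥ (vc Z - vc Z')
        + Complex.I * Complex.ofReal (Omega n Z Z')))

/-- S = (Π_0^1 - φ⁻¹·conj(Π_1^0))(Id - φ), with J₁ = φJ₀φ⁻¹. -/
def Smat (n : ℕ) (φ : Matrix (Fin (2*n)) (Fin (2*n)) ℝ) : Matrix (Fin (2*n)) (Fin (2*n)) ℂ :=
  (Pi0T n (φ * J0 n * φ⁻¹)
      - mc φ⁻¹ * (PiT0 n (φ * J0 n * φ⁻¹)).map (⇑(starRingEnd ℂ))) * (1 - mc φ)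

section SymplecticAlgebra

variable {R : Type*} [Ring R] [StarRing R] {G φ ψ A : R}

lemma star_mul_eq_mul_inv (hφ : star φ * G * φ = G) (hφψ : φ * ψ = 1) :
    star φ * G = G * ψ := by
  calc star φ * G = star φ * G * (φ * ψ) := by rw [hφψ, mul_one]
    _ = G * ψ := by rw [← mul_assoc, hφ]

lemma mul_star_eq_inv_mul (hG : G * G = -1) (hφ : star φ * G * φ = G) (hφψ : φ * ψ = 1) :
    G * star φ = ψ * G := by
  calc G * star φ = -(G * (star φ * G) * G) := by rw [mul_assoc, mul_assoc, hG]; noncomm_ring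
    _ = ψ * G := by rw [star_mul_eq_mul_inv hφ hφψ, ← mul_assoc, hG]; noncomm_ring

lemma mul_mul_star_eq (hG : G * G = -1) (hφ : star φ * G * φ = G) (hφψ : φ * ψ = 1) :
    φ * G * star φ = G := by
  rw [mul_assoc, mul_star_eq_inv_mul hG hφ hφψ, ← mul_assoc, hφψ, one_mul]

lemma mul_eq_star_inv_mul (hGs : star G = -G) (hφ : star φ * G * φ = G) (hφψ : φ * ψ = 1) :
    G * φ = star ψ * G := by
  simpa [hGs] using congrArg star (star_mul_eq_mul_inv hφ hφψ)

lemma neg_mul_star_mul_mul_eq_one (hG : G * G = -1) (hφ : star φ * G * φ = G) :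
    -(G * star φ * G) * φ = 1 := by
  calc -(G * star φ * G) * φ = -(G * (star φ * G * φ)) := by noncomm_ring
    _ = 1 := by rw [hφ, hG, neg_neg]

lemma isSelfAdjoint_of_mul_eq_one {M : R} (hM : IsSelfAdjoint M) (hMA : M * A = 1) :
    IsSelfAdjoint A := by
  have h : star A * M = 1 := by rw [← hM, ← star_mul, hMA, star_one]
  calc star A = star A * M * A := by rw [mul_assoc, hMA, mul_one]
    _ = A := by rw [h, one_mul]

lemma one_add_neg_conj_mul_eq (hG : G * G = -1) (hφ : star φ * G * φ = G) (hφψ : φ * ψ = 1) :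
    1 + -(φ * G * ψ) * G = 1 + φ * star φ := by
  calc 1 + -(φ * G * ψ) * G = 1 - φ * (G * ψ) * G := by noncomm_ring
    _ = 1 - φ * star φ * (G * G) := by rw [← star_mul_eq_mul_inv hφ hφψ]; noncomm_ring
    _ = 1 + φ * star φ := by rw [hG]; noncomm_ring

lemma one_add_neg_mul_conj_eq (hG : G * G = -1) (hGs : star G = -G)
    (hφ : star φ * G * φ = G) (hφψ : φ * ψ = 1) :
    1 + -G * (φ * G * ψ) = 1 + star ψ * ψ := by
  calc 1 + -G * (φ * G * ψ) = 1 - G * φ * G * ψ := by noncomm_ring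
    _ = 1 - star ψ * (G * G) * ψ := by rw [mul_eq_star_inv_mul hGs hφ hφψ]; noncomm_ring
    _ = 1 + star ψ * ψ := by rw [hG]; noncomm_ring

lemma one_sub_eq_mul_star_mul (hA : (1 + φ * star φ) * A = 1) : 1 - A = φ * star φ * A := by
  rw [← hA]; noncomm_ring

lemma one_sub_eq_mul_mul_star (hA : A * (1 + φ * star φ) = 1) : 1 - A = A * (φ * star φ) := by
  rw [← hA]; noncomm_ring

lemma mul_add_mul_eq_self (hG : G * G = -1) (hφ : star φ * G * φ = G) (hφψ : φ * ψ = 1)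
    (hA : A * (1 + φ * star φ) = 1) (hA' : (1 + φ * star φ) * A = 1) :
    G * A + A * G = G := by
  have hMGM : (1 + φ * star φ) * G * (1 + φ * star φ) =
      (1 + φ * star φ) * G + G * (1 + φ * star φ) := by
    calc (1 + φ * star φ) * G * (1 + φ * star φ)
          = G + φ * star φ * G + G * (φ * star φ) + φ * (star φ * G * φ) * star φ := by
          noncomm_ring
      _ = (1 + φ * star φ) * G + G * (1 + φ * star φ) := by
          rw [hφ, mul_mul_star_eq hG hφ hφψ]; noncomm_ring
  calc G * A + A * G = A * (1 + φ * star φ) * G * A + A * G * ((1 + φ * star φ) * A) := by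
        rw [hA, hA']; noncomm_ring
    _ = A * ((1 + φ * star φ) * G * (1 + φ * star φ)) * A := by rw [hMGM]; noncomm_ring
    _ = G := by rw [← mul_assoc, ← mul_assoc, hA, mul_assoc, hA']; noncomm_ring

lemma mul_conj_eq_mul (hG : G * G = -1) (hφ : star φ * G * φ = G) (hφψ : φ * ψ = 1)
    (hA : A * (1 + φ * star φ) = 1) (hA' : (1 + φ * star φ) * A = 1) :
    A * (φ * G * ψ) = G * A := by
  calc A * (φ * G * ψ) = A * (φ * star φ) * G := by
        rw [mul_assoc φ, ← star_mul_eq_mul_inv hφ hφψ]; noncomm_ring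
    _ = G * A + A * G - A * G := by
        rw [← one_sub_eq_mul_mul_star hA, mul_add_mul_eq_self hG hφ hφψ hA hA']; noncomm_ring
    _ = G * A := by noncomm_ring

lemma one_sub_mul_one_add_star_mul_eq_one (hφψ : φ * ψ = 1) (hψφ : ψ * φ = 1)
    (hA : A * (1 + φ * star φ) = 1) :
    (1 - A) * (1 + star ψ * ψ) = 1 := by
  calc (1 - A) * (1 + star ψ * ψ) = A * (φ * star φ + φ * star (ψ * φ) * ψ) := by
        rw [one_sub_eq_mul_mul_star hA, star_mul]; noncomm_ring
    _ = 1 := by rw [hψφ, star_one, mul_one, hφψ, add_comm, hA]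

-- Real and imaginary parts of `(Π₀¹ - φ⁻¹ conj Π₁⁰)(1 - φ)` with `J = φGφ⁻¹`,
-- `Π₀¹ = A(1 - iJ)` and `conj Π₁⁰ = (1 - A)(1 + iG)`.
lemma real_part_eq (hψφ : ψ * φ = 1) (hA' : (1 + φ * star φ) * A = 1) :
    (A - ψ * (1 - A)) * (1 - φ) = star (1 - φ) * A * (1 - φ) := by
  calc (A - ψ * (1 - A)) * (1 - φ) = (A - ψ * φ * star φ * A) * (1 - φ) := by
        rw [one_sub_eq_mul_star_mul hA']; noncomm_ring
    _ = star (1 - φ) * A * (1 - φ) := by rw [hψφ, star_sub, star_one]; noncomm_ring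

lemma imag_part_eq (hG : G * G = -1) (hφ : star φ * G * φ = G) (hφψ : φ * ψ = 1)
    (hψφ : ψ * φ = 1) (hA : A * (1 + φ * star φ) = 1) (hA' : (1 + φ * star φ) * A = 1) :
    -(A * (φ * G * ψ) + ψ * ((1 - A) * G)) * (1 - φ) =
      star φ * G * (φ - 1) - star (φ - 1) * (G * A) * (φ - 1) := by
  have hAG : A * G = G - G * A := eq_sub_of_add_eq' (mul_add_mul_eq_self hG hφ hφψ hA hA')
  calc -(A * (φ * G * ψ) + ψ * ((1 - A) * G)) * (1 - φ)
        = -(G * A + ψ * φ * star φ * (A * G)) * (1 - φ) := by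
        rw [mul_conj_eq_mul hG hφ hφψ hA hA', one_sub_eq_mul_star_mul hA']; noncomm_ring
    _ = star φ * G * (φ - 1) - star (φ - 1) * (G * A) * (φ - 1) := by
        rw [hψφ, hAG, star_sub, star_one]; noncomm_ring

lemma isSelfAdjoint_imag_part (hG : G * G = -1) (hGs : star G = -G) (hφ : star φ * G * φ = G)
    (hφψ : φ * ψ = 1) (hA : A * (1 + φ * star φ) = 1) (hA' : (1 + φ * star φ) * A = 1) :
    IsSelfAdjoint (star φ * G * (φ - 1) - star (φ - 1) * (G * A) * (φ - 1)) := by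
  have hAs : star A = A := isSelfAdjoint_of_mul_eq_one (by simp [IsSelfAdjoint]) hA'
  have hAG : A * G = G - G * A := eq_sub_of_add_eq' (mul_add_mul_eq_self hG hφ hφψ hA hA')
  rw [IsSelfAdjoint, ← sub_eq_zero]
  simp only [star_sub, star_mul, star_star, hAs, hGs, star_one, mul_neg]
  rw [hAG]
  calc _ = G - star φ * G * φ := by noncomm_ring
    _ = 0 := by rw [hφ, sub_self]

end SymplecticAlgebra

lemma star_eq_transpose {m : ℕ} (M : Matrix (Fin m) (Fin m) ℝ) : star M = Mᵀ := by
  rw [star_eq_conjTranspose, conjTranspose_eq_transpose_of_trivial]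

lemma J0_transpose (n : ℕ) : (J0 n)ᵀ = -J0 n := by
  ext i j
  simp only [transpose_apply, Matrix.neg_apply, J0, of_apply]
  split_ifs <;> first | omega | norm_num

lemma J0_mul_J0 (n : ℕ) : J0 n * J0 n = -1 := by
  ext i j
  rw [mul_apply, Matrix.neg_apply, one_apply, apply_ite Neg.neg, neg_zero]
  -- the only nonzero entry of row `i` of `J0 n` sits at its partner index `i ± 1`
  have hp : (if (i : ℕ) % 2 = 0 then (i : ℕ) + 1 else (i : ℕ) - 1) < 2 * n := by
    split_ifs <;> omega
  rw [Finset.sum_eq_single ⟨_, hp⟩]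
  · simp only [J0, of_apply, Fin.ext_iff]
    split_ifs <;> first | omega | norm_num
  · intro k _ hk
    have hk' : (k : ℕ) ≠ if (i : ℕ) % 2 = 0 then (i : ℕ) + 1 else (i : ℕ) - 1 :=
      fun h => hk (Fin.ext h)
    simp only [J0, of_apply]
    split_ifs at hk' ⊢ <;> first | omega | norm_num
  · simp

lemma star_J0 (n : ℕ) : star (J0 n) = -J0 n := by
  rw [star_eq_transpose, J0_transpose]

lemma Omega_swap (n : ℕ) (u v : Fin (2 * n) → ℝ) : Omega n u v = -Omega n v u := by
  rw [Omega, Omega, dotProduct_comm, dotProduct_mulVec, ← mulVec_transpose, J0_transpose,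
    neg_mulVec, neg_dotProduct]

lemma Omega_self (n : ℕ) (u : Fin (2 * n) → ℝ) : Omega n u u = 0 := by
  linarith [Omega_swap n u u]

lemma Omega_sub_left (n : ℕ) (u v w : Fin (2 * n) → ℝ) :
    Omega n (u - v) w = Omega n u w - Omega n v w := by
  rw [Omega, Omega, Omega, mulVec_sub, sub_dotProduct]

lemma transpose_mul_mul_mulVec_dotProduct {m : ℕ} (B M C : Matrix (Fin m) (Fin m) ℝ)
    (u v : Fin m → ℝ) : ((Bᵀ * M * C) *ᵥ u) ⬝ᵥ v = (M *ᵥ (C *ᵥ u)) ⬝ᵥ (B *ᵥ v) := by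
  rw [← mulVec_mulVec, ← mulVec_mulVec, mulVec_transpose, ← dotProduct_mulVec, dotProduct_comm]

lemma transpose_mul_J0_mul_eq {n : ℕ} {M : Matrix (Fin (2 * n)) (Fin (2 * n)) ℝ}
    (hM : ∀ u v, Omega n (M *ᵥ u) (M *ᵥ v) = Omega n u v) : Mᵀ * J0 n * M = J0 n := by
  ext i j
  calc (Mᵀ * J0 n * M) i j = ((Mᵀ * J0 n * M) *ᵥ Pi.single j 1) ⬝ᵥ Pi.single i 1 := by simp
    _ = Omega n (M *ᵥ Pi.single j 1) (M *ᵥ Pi.single i 1) :=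
        transpose_mul_mul_mulVec_dotProduct _ _ _ _ _
    _ = J0 n i j := by rw [hM]; simp [Omega]

section Complexification

variable {m : ℕ}

lemma mc_mul (M N : Matrix (Fin m) (Fin m) ℝ) : mc (M * N) = mc M * mc N :=
  Matrix.map_mul (f := Complex.ofRealHom)

lemma mc_sub (M N : Matrix (Fin m) (Fin m) ℝ) : mc (M - N) = mc M - mc N := by
  ext i j; simp [mc]

lemma mc_add (M N : Matrix (Fin m) (Fin m) ℝ) : mc (M + N) = mc M + mc N := by
  ext i j; simp [mc]

lemma mc_neg (M : Matrix (Fin m) (Fin m) ℝ) : mc (-M) = -mc M := by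
  ext i j; simp [mc]

lemma mc_one : mc (1 : Matrix (Fin m) (Fin m) ℝ) = 1 :=
  Matrix.map_one _ Complex.ofReal_zero Complex.ofReal_one

lemma mc_smul (r : ℝ) (M : Matrix (Fin m) (Fin m) ℝ) : mc (r • M) = (r : ℂ) • mc M := by
  ext i j; simp [mc]

lemma mc_mulVec_vc (M : Matrix (Fin m) (Fin m) ℝ) (v : Fin m → ℝ) :
    mc M *ᵥ vc v = vc (M *ᵥ v) := by
  ext i; simp [mc, vc, mulVec, dotProduct]

lemma vc_dotProduct_vc (v w : Fin m → ℝ) : vc v ⬝ᵥ vc w = ((v ⬝ᵥ w : ℝ) : ℂ) := by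
  simp [vc, dotProduct]

lemma vc_sub (v w : Fin m → ℝ) : vc (v - w) = vc v - vc w := by
  ext i; simp [vc]

lemma map_conj_mc_sub_I_smul (X Y : Matrix (Fin m) (Fin m) ℝ) :
    (mc X - Complex.I • mc Y).map (starRingEnd ℂ) = mc X + Complex.I • mc Y := by
  ext i j; simp [mc]

lemma transpose_mc_add_I_smul (X Y : Matrix (Fin m) (Fin m) ℝ) :
    (mc X + Complex.I • mc Y)ᵀ = mc Xᵀ + Complex.I • mc Yᵀ := by
  ext i j; simp [mc]

lemma map_re_mc_add_I_smul (X Y : Matrix (Fin m) (Fin m) ℝ) :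
    (mc X + Complex.I • mc Y).map Complex.re = X := by
  ext i j; simp [mc]

lemma mc_add_I_smul_mulVec_dotProduct (X Y : Matrix (Fin m) (Fin m) ℝ) (v w : Fin m → ℝ) :
    ((mc X + Complex.I • mc Y) *ᵥ vc v) ⬝ᵥ vc w =
      (((X *ᵥ v) ⬝ᵥ w : ℝ) : ℂ) + Complex.I * (((Y *ᵥ v) ⬝ᵥ w : ℝ) : ℂ) := by
  rw [add_mulVec, smul_mulVec, add_dotProduct, smul_dotProduct, mc_mulVec_vc, mc_mulVec_vc,
    vc_dotProduct_vc, vc_dotProduct_vc, smul_eq_mul]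

end Complexification

lemma Amat_eq_two_smul {n : ℕ} {K J X : Matrix (Fin (2 * n)) (Fin (2 * n)) ℝ}
    (hX : X * (1 + -K * J) = 1) : Amat n K J = (2 : ℝ) • X := by
  rw [Amat]
  apply inv_eq_left_inv
  rw [smul_mul_smul_comm, hX]
  norm_num

lemma mc_two_smul_mul_P10 {n : ℕ} (X K : Matrix (Fin (2 * n)) (Fin (2 * n)) ℝ) :
    mc ((2 : ℝ) • X) * P10 K = mc X - Complex.I • mc (X * K) := by
  rw [P10, mc_smul, smul_mul_smul_comm, mul_sub, mul_one, mul_smul_comm, mc_mul]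
  norm_num

lemma Pi0T_eq {n : ℕ} {J X : Matrix (Fin (2 * n)) (Fin (2 * n)) ℝ}
    (hX : X * (1 + -J * J0 n) = 1) : Pi0T n J = mc X - Complex.I • mc (X * J) := by
  rw [Pi0T, Amat_eq_two_smul hX, mc_two_smul_mul_P10]

lemma PiT0_eq {n : ℕ} {J Y : Matrix (Fin (2 * n)) (Fin (2 * n)) ℝ}
    (hY : Y * (1 + -J0 n * J) = 1) : PiT0 n J = mc Y - Complex.I • mc (Y * J0 n) := by
  rw [PiT0, Amat_eq_two_smul hY, mc_two_smul_mul_P10]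

lemma Smat_eq {n : ℕ} {φ X Y : Matrix (Fin (2 * n)) (Fin (2 * n)) ℝ}
    (hX : X * (1 + -(φ * J0 n * φ⁻¹) * J0 n) = 1) (hY : Y * (1 + -J0 n * (φ * J0 n * φ⁻¹)) = 1) :
    Smat n φ = mc ((X - φ⁻¹ * Y) * (1 - φ)) +
      Complex.I • mc (-(X * (φ * J0 n * φ⁻¹) + φ⁻¹ * (Y * J0 n)) * (1 - φ)) := by
  rw [Smat, Pi0T_eq hX, PiT0_eq hY, map_conj_mc_sub_I_smul]
  simp only [mc_mul, mc_sub, mc_add, mc_neg, mc_one, smul_sub, smul_add, smul_neg, mul_smul_comm,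
    smul_mul_assoc, sub_mul, mul_sub, add_mul, mul_add, neg_mul]
  abel

lemma real_part_quadratic_eq {m : ℕ} (A φ : Matrix (Fin m) (Fin m) ℝ) (Z : Fin m → ℝ) :
    ((star (1 - φ) * A * (1 - φ)) *ᵥ Z) ⬝ᵥ Z = (A *ᵥ (φ *ᵥ Z - Z)) ⬝ᵥ (φ *ᵥ Z - Z) := by
  have h : (1 - φ) *ᵥ Z = -(φ *ᵥ Z - Z) := by rw [sub_mulVec, one_mulVec, neg_sub]
  rw [star_eq_transpose, transpose_mul_mul_mulVec_dotProduct, h, mulVec_neg, neg_dotProduct_neg]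

lemma imag_part_quadratic_eq {n : ℕ} (A φ : Matrix (Fin (2 * n)) (Fin (2 * n)) ℝ)
    (Z : Fin (2 * n) → ℝ) :
    ((star φ * J0 n * (φ - 1) - star (φ - 1) * (J0 n * A) * (φ - 1)) *ᵥ Z) ⬝ᵥ Z =
      Omega n (φ *ᵥ Z) Z - ((J0 n * A) *ᵥ (φ *ᵥ Z - Z)) ⬝ᵥ (φ *ᵥ Z - Z) := by
  have h : (φ - 1) *ᵥ Z = φ *ᵥ Z - Z := by rw [sub_mulVec, one_mulVec]
  have hΩ : Omega n (φ *ᵥ Z - Z) (φ *ᵥ Z) = Omega n (φ *ᵥ Z) Z := by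
    rw [Omega_sub_left, Omega_self, Omega_swap n Z, zero_sub, neg_neg]
  rw [sub_mulVec, sub_dotProduct, star_eq_transpose, star_eq_transpose,
    transpose_mul_mul_mulVec_dotProduct, transpose_mul_mul_mulVec_dotProduct, h, ← hΩ]
  rfl

lemma Pi0T_conj_eq {n : ℕ} {φ A : Matrix (Fin (2 * n)) (Fin (2 * n)) ℝ}
    (hφ : star φ * J0 n * φ = J0 n) (hφψ : φ * φ⁻¹ = 1)
    (hA : A * (1 + φ * star φ) = 1) (hA' : (1 + φ * star φ) * A = 1) :
    Pi0T n (φ * J0 n * φ⁻¹) = mc A - Complex.I • mc (J0 n * A) := by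
  have hG := J0_mul_J0 n
  rw [Pi0T_eq (by rwa [one_add_neg_conj_mul_eq hG hφ hφψ]), mul_conj_eq_mul hG hφ hφψ hA hA']

lemma Smat_eq_of_symplectic {n : ℕ} {φ A : Matrix (Fin (2 * n)) (Fin (2 * n)) ℝ}
    (hφ : star φ * J0 n * φ = J0 n) (hφψ : φ * φ⁻¹ = 1) (hψφ : φ⁻¹ * φ = 1)
    (hA : A * (1 + φ * star φ) = 1) (hA' : (1 + φ * star φ) * A = 1) :
    Smat n φ = mc (star (1 - φ) * A * (1 - φ)) +
      Complex.I • mc (star φ * J0 n * (φ - 1) - star (φ - 1) * (J0 n * A) * (φ - 1)) := by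
  have hG := J0_mul_J0 n
  have hX : A * (1 + -(φ * J0 n * φ⁻¹) * J0 n) = 1 := by
    rwa [one_add_neg_conj_mul_eq hG hφ hφψ]
  have hY : (1 - A) * (1 + -J0 n * (φ * J0 n * φ⁻¹)) = 1 := by
    rw [one_add_neg_mul_conj_eq hG (star_J0 n) hφ hφψ]
    exact one_sub_mul_one_add_star_mul_eq_one hφψ hψφ hA
  rw [Smat_eq hX hY, real_part_eq hψφ hA', imag_part_eq hG hφ hφψ hψφ hA hA']

theorem stmt11_general (n : ℕ) (φ : Matrix (Fin (2*n)) (Fin (2*n)) ℝ)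
    (hsymp : ∀ u v, Omega n (φ *ᵥ u) (φ *ᵥ v) = Omega n u v)
    (hinv : IsUnit (1 - φ)) :
    (Smat n φ)ᵀ = Smat n φ ∧
    (∀ v : Fin (2*n) → ℝ, v ≠ 0 → 0 < (((Smat n φ).map Complex.re) *ᵥ v) ⬝ᵥ v) ∧
    ∀ Z : Fin (2*n) → ℝ,
      (Pi0T n (φ * J0 n * φ⁻¹) *ᵥ (vc (φ *ᵥ Z) - vc Z)) ⬝ᵥ (vc (φ *ᵥ Z) - vc Z)
          + Complex.I * Complex.ofReal (Omega n (φ *ᵥ Z) Z)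
        = (Smat n φ *ᵥ vc Z) ⬝ᵥ vc Z := by
  have hφ : star φ * J0 n * φ = J0 n := by
    rw [star_eq_transpose]; exact transpose_mul_J0_mul_eq hsymp
  have hdet : IsUnit φ.det :=
    isUnit_det_of_left_inverse (neg_mul_star_mul_mul_eq_one (J0_mul_J0 n) hφ)
  have hφψ := mul_nonsing_inv φ hdet
  have hpos : (1 + φ * star φ).PosDef :=
    PosDef.one.add_posSemidef (posSemidef_self_mul_conjTranspose φ)
  have hdetM := (isUnit_iff_isUnit_det _).1 hpos.isUnit
  set A := (1 + φ * star φ)⁻¹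
  have hA : A * (1 + φ * star φ) = 1 := nonsing_inv_mul _ hdetM
  have hA' : (1 + φ * star φ) * A = 1 := mul_nonsing_inv _ hdetM
  have hS := Smat_eq_of_symplectic hφ hφψ (nonsing_inv_mul φ hdet) hA hA'
  refine ⟨?_, fun v hv => ?_, fun Z => ?_⟩
  · rw [hS, transpose_mc_add_I_smul, ← star_eq_transpose, ← star_eq_transpose,
      (hpos.inv.isHermitian.isSelfAdjoint.conjugate' _).star_eq,
      (isSelfAdjoint_imag_part (J0_mul_J0 n) (star_J0 n) hφ hφψ hA hA').star_eq]
  · have hS0 := hpos.inv.conjTranspose_mul_mul_same (mulVec_injective_iff_isUnit.2 hinv)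
    rw [hS, map_re_mc_add_I_smul, dotProduct_comm, ← star_trivial v]
    exact (posDef_iff_dotProduct_mulVec.1 hS0).2 hv
  · rw [Pi0T_conj_eq hφ hφψ hA hA', ← vc_sub, hS, sub_eq_add_neg, ← smul_neg, ← mc_neg,
      mc_add_I_smul_mulVec_dotProduct, mc_add_I_smul_mulVec_dotProduct,
      real_part_quadratic_eq, imag_part_quadratic_eq, neg_mulVec, neg_dotProduct]
    push_cast
    ring

/-- S is symmetric with positive definite real part, and
⟨Π_0^1(φZ-Z),φZ-Z⟩ + iΩ(φZ,Z) = ⟨SZ,Z⟩ for all Z ∈ ℝ^{2n}. -/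
theorem stmt11 (n : ℕ) (φ : Matrix (Fin (2*n)) (Fin (2*n)) ℝ)
    (hsymp : ∀ u v, Omega n (φ *ᵥ u) (φ *ᵥ v) = Omega n u v)
    (hJ1 : Compatible n (φ * J0 n * φ⁻¹))
    (hinv : IsUnit (1 - φ)) :
    (Smat n φ)ᵀ = Smat n φ ∧
    (∀ v : Fin (2*n) → ℝ, v ≠ 0 → 0 < (((Smat n φ).map Complex.re) *ᵥ v) ⬝ᵥ v) ∧
    ∀ Z : Fin (2*n) → ℝ,
      (Pi0T n (φ * J0 n * φ⁻¹) *ᵥ (vc (φ *ᵥ Z) - vc Z)) ⬝ᵥ (vc (φ *ᵥ Z) - vc Z)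
          + Complex.I * Complex.ofReal (Omega n (φ *ᵥ Z) Z)
        = (Smat n φ *ᵥ vc Z) ⬝ᵥ vc Z :=
  stmt11_general n φ hsymp hinv

end
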